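/- arXiv:2411.01207 — 2 statements merged into one kernel-verified Lean document; each statement's English description precedes it below -/
import Mathlib

section
/- Let G be a finite simple graph with n vertices and m edges, spectral radius ρ, and let d = ⌈2m/n⌉. Then ρ² − (d−1)ρ ≤ d + s(G)/2, where s(G) is the degree deviation of G. -/
/-!
Let `y` be an eigenvector of `A = A(G)` for `ρ`. Then `z = |y|` is nonnegative with `ρ z ≤ A z`
by the triangle inequality. Let `u` maximise `z` and `S = ∑ z`. Since `u` is not its own
neighbour, `(ρ + 1) z_u ≤ S`; summing `ρ z ≤ A z` gives `ρ S ≤ ∑ deg(v) z_v`, so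
`(ρ - 2m/n) S ≤ ∑ (deg(v) - 2m/n) z_v ≤ s/2 ⋅ z_u`, because the deviations `deg(v) - 2m/n` sum
to zero and only the positive ones count. Hence `(ρ - 2m/n)(ρ + 1) ≤ s/2` when `ρ ≥ 2m/n`,
which gives the claim as `2m/n ≤ d`; when `ρ ≤ d` the claim is trivial since `ρ ≥ 0` (the trace
of `A` vanishes).
-/

open Finset Matrix

/-- The adjacency matrix of a simple graph over `ℝ` is Hermitian. -/
lemma SimpleGraph.isHermitian_adjMatrix' {V : Type*} [Fintype V] (G : SimpleGraph V)
    [DecidableRel G.Adj] : (G.adjMatrix ℝ).IsHermitian := by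
  rw [Matrix.IsHermitian, Matrix.conjTranspose_eq_transpose_of_trivial]
  exact G.isSymm_adjMatrix

/-- The spectral radius of a simple graph: the largest eigenvalue of its adjacency matrix. -/
noncomputable def SimpleGraph.spectralRadius {V : Type*} [Fintype V] [DecidableEq V]
    (G : SimpleGraph V) [DecidableRel G.Adj] : ℝ :=
  ⨆ i, (G.isHermitian_adjMatrix').eigenvalues i

/-- The degree deviation of a simple graph: `s(G) = ∑_v |d(v) - 2m/n|`. -/
noncomputable def SimpleGraph.degreeDeviation {V : Type*} [Fintype V] [DecidableEq V]
    (G : SimpleGraph V) [DecidableRel G.Adj] : ℝ :=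
  ∑ v, |(G.degree v : ℝ) - 2 * (G.edgeFinset.card : ℝ) / (Fintype.card V : ℝ)|

theorem Matrix.smul_abs_le_mulVec_abs {ι R : Type*} [Fintype ι] [Ring R] [LinearOrder R]
    [IsStrictOrderedRing R] {A : Matrix ι ι R} (hA : ∀ i j, 0 ≤ A i j) {μ : R} {y : ι → R}
    (hy : A *ᵥ y = μ • y) : μ • |y| ≤ A *ᵥ |y| := by
  intro i
  calc μ * |y i| ≤ |μ| * |y i| := mul_le_mul_of_nonneg_right (le_abs_self μ) (abs_nonneg _)
    _ = |(A *ᵥ y) i| := by rw [hy, Pi.smul_apply, smul_eq_mul, abs_mul]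
    _ ≤ ∑ j, |A i j * y j| := abs_sum_le_sum_abs _ _
    _ = (A *ᵥ |y|) i := by simp [mulVec, dotProduct, abs_mul, abs_of_nonneg (hA i _)]

theorem Finset.sum_mul_le_half_sum_abs_mul {ι R : Type*} [Field R] [LinearOrder R]
    [IsStrictOrderedRing R] (s : Finset ι) {f z : ι → R} {M : R} (hf : ∑ i ∈ s, f i = 0)
    (hz : ∀ i ∈ s, 0 ≤ z i) (hzM : ∀ i ∈ s, z i ≤ M) :
    ∑ i ∈ s, f i * z i ≤ (∑ i ∈ s, |f i|) / 2 * M := by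
  calc ∑ i ∈ s, f i * z i ≤ ∑ i ∈ s, (|f i| + f i) / 2 * M := by
        refine sum_le_sum fun i hi => ?_
        rcases le_total 0 (f i) with hfi | hfi
        · rw [abs_of_nonneg hfi, add_self_div_two]
          exact mul_le_mul_of_nonneg_left (hzM i hi) hfi
        · rw [abs_of_nonpos hfi, neg_add_cancel, zero_div, zero_mul]
          exact mul_nonpos_of_nonpos_of_nonneg hfi (hz i hi)
    _ = (∑ i ∈ s, |f i|) / 2 * M := by rw [← sum_mul, ← sum_div, sum_add_distrib, hf, add_zero]

namespace SimpleGraph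

variable {V R : Type*} [Fintype V] (G : SimpleGraph V) [DecidableRel G.Adj]

theorem sum_adjMatrix_mulVec [CommSemiring R] (z : V → R) :
    ∑ v, (G.adjMatrix R *ᵥ z) v = ∑ v, G.degree v * z v := by
  calc ∑ v, (G.adjMatrix R *ᵥ z) v = (fun _ => 1) ⬝ᵥ (G.adjMatrix R *ᵥ z) := by
        simp [dotProduct]
    _ = ((fun _ => 1) ᵥ* G.adjMatrix R) ⬝ᵥ z := dotProduct_mulVec _ _ _
    _ = ∑ v, G.degree v * z v := by simp [dotProduct, adjMatrix_vecMul_apply]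

theorem adjMatrix_mulVec_apply_add_le_sum [Semiring R] [PartialOrder R] [IsOrderedRing R]
    {z : V → R} (hz : 0 ≤ z) (v : V) : (G.adjMatrix R *ᵥ z) v + z v ≤ ∑ w, z w := by
  classical
  rw [adjMatrix_mulVec_apply, ← sum_erase_add _ _ (mem_univ v)]
  refine add_le_add (sum_le_sum_of_subset_of_nonneg (fun w hw => ?_) fun w _ _ => hz w) le_rfl
  exact mem_erase.2 ⟨(G.mem_neighborFinset v w).1 hw |>.ne', mem_univ w⟩

noncomputable def averageDegree : ℝ := 2 * #G.edgeFinset / Fintype.card V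

theorem sum_degree_sub_averageDegree [Nonempty V] :
    ∑ v, ((G.degree v : ℝ) - G.averageDegree) = 0 := by
  have hsum : ∑ v, (G.degree v : ℝ) = 2 * #G.edgeFinset := by
    exact_mod_cast G.sum_degrees_eq_twice_card_edges
  rw [sum_sub_distrib, hsum, sum_const, card_univ, nsmul_eq_mul, averageDegree]
  field_simp
  ring

theorem sub_averageDegree_mul_add_one_le_degreeDeviation [DecidableEq V] {μ : ℝ} {z : V → ℝ}
    (hz : 0 ≤ z) (hz0 : z ≠ 0) (hμz : μ • z ≤ G.adjMatrix ℝ *ᵥ z) (hμ : G.averageDegree ≤ μ) :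
    (μ - G.averageDegree) * (μ + 1) ≤ G.degreeDeviation / 2 := by
  obtain ⟨v, hv⟩ := Function.ne_iff.1 hz0
  have : Nonempty V := ⟨v⟩
  obtain ⟨u, hu⟩ := Finite.exists_max z
  have hzu : 0 < z u := (lt_of_le_of_ne (hz v) (Ne.symm hv)).trans_le (hu v)
  set a := G.averageDegree
  set S := ∑ w, z w
  have hS : (μ + 1) * z u ≤ S := by
    linarith [hμz u, G.adjMatrix_mulVec_apply_add_le_sum hz u, show (μ • z) u = μ * z u from rfl]
  have hdev : (μ - a) * S ≤ G.degreeDeviation / 2 * z u :=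
    calc (μ - a) * S = ∑ w, (μ • z) w - ∑ w, a * z w := by
          simp only [Pi.smul_apply, smul_eq_mul, ← mul_sum]; ring
      _ ≤ ∑ w, (G.adjMatrix ℝ *ᵥ z) w - ∑ w, a * z w := by gcongr with w; exact hμz w
      _ = ∑ w, ((G.degree w : ℝ) - a) * z w := by
          rw [sum_adjMatrix_mulVec, ← sum_sub_distrib]; simp only [sub_mul]
      _ ≤ G.degreeDeviation / 2 * z u :=
          sum_mul_le_half_sum_abs_mul _ G.sum_degree_sub_averageDegree (fun w _ => hz w)
            fun w _ => hu w
  refine le_of_mul_le_mul_right ?_ hzu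
  calc (μ - a) * (μ + 1) * z u = (μ - a) * ((μ + 1) * z u) := mul_assoc _ _ _
    _ ≤ (μ - a) * S := mul_le_mul_of_nonneg_left hS (sub_nonneg.2 hμ)
    _ ≤ G.degreeDeviation / 2 * z u := hdev

variable [DecidableEq V] [Nonempty V]

theorem exists_mulVec_eq_spectralRadius_smul :
    ∃ y ≠ 0, G.adjMatrix ℝ *ᵥ y = G.spectralRadius • y := by
  obtain ⟨i, hi⟩ : ∃ i, G.isHermitian_adjMatrix'.eigenvalues i = G.spectralRadius :=
    exists_eq_ciSup_of_finite
  refine ⟨_, ?_, hi ▸ G.isHermitian_adjMatrix'.mulVec_eigenvectorBasis i⟩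
  exact (WithLp.ofLp_eq_zero 2).ne.2 <|
    G.isHermitian_adjMatrix'.eigenvectorBasis.orthonormal.ne_zero i

theorem spectralRadius_nonneg : 0 ≤ G.spectralRadius := by
  have htr : ∑ i, G.isHermitian_adjMatrix'.eigenvalues i = 0 := by
    have := G.isHermitian_adjMatrix'.trace_eq_sum_eigenvalues (𝕜 := ℝ)
    rwa [trace_adjMatrix, eq_comm] at this
  have hsum : ∑ _i : V, (0 : ℝ) ≤ ∑ i, G.isHermitian_adjMatrix'.eigenvalues i := by simp [htr]
  obtain ⟨i, -, hi⟩ := exists_le_of_sum_le univ_nonempty hsum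
  exact hi.trans (le_ciSup (Set.finite_range _).bddAbove i)

end SimpleGraph

/-- With `ρ = ρ(G)` and `d = ⌈2m/n⌉`, we have `ρ² - (d-1)ρ ≤ d + s(G)/2`. -/
theorem spectralRadius_quadratic_ineq
    {V : Type*} [Fintype V] [DecidableEq V] [Nonempty V]
    (G : SimpleGraph V) [DecidableRel G.Adj]
    (d : ℕ) (hd : d = ⌈2 * (G.edgeFinset.card : ℝ) / (Fintype.card V : ℝ)⌉₊) :
    G.spectralRadius ^ 2 - ((d : ℝ) - 1) * G.spectralRadius ≤
      (d : ℝ) + G.degreeDeviation / 2 := by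
  have hρ := G.spectralRadius_nonneg
  have hs : 0 ≤ G.degreeDeviation := sum_nonneg fun _ _ => abs_nonneg _
  have had : G.averageDegree ≤ d := hd ▸ Nat.le_ceil _
  suffices (G.spectralRadius - d) * (G.spectralRadius + 1) ≤ G.degreeDeviation / 2 by
    linear_combination this
  rcases le_or_gt G.spectralRadius d with hρd | hρd
  · exact (mul_nonpos_of_nonpos_of_nonneg (sub_nonpos.2 hρd) (by linarith)).trans (by positivity)
  obtain ⟨y, hy0, hy⟩ := G.exists_mulVec_eq_spectralRadius_smul
  have hA : ∀ v w, 0 ≤ G.adjMatrix ℝ v w := fun v w => by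
    rw [SimpleGraph.adjMatrix_apply]; positivity
  have hkey := G.sub_averageDegree_mul_add_one_le_degreeDeviation (abs_nonneg y)
    (fun h => hy0 (funext fun v => abs_eq_zero.1 (congrFun h v))) (smul_abs_le_mulVec_abs hA hy)
    (had.trans hρd.le)
  exact (mul_le_mul_of_nonneg_right (sub_le_sub_left had _) (by linarith)).trans hkey
end

section
/- Let G be a finite simple graph with n vertices and m edges, spectral radius ρ, and let d = ⌈2m/n⌉. Then ρ ≤ d + √(s(G)/2), where s(G) is the degree deviation of G. -/
open Finset Matrix

namespace Matrix

variable {n : Type*} [Fintype n]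

theorem dotProduct_mulVec_le_abs {A : Matrix n n ℝ} (hA : ∀ i j, 0 ≤ A i j) (x : n → ℝ) :
    x ⬝ᵥ A *ᵥ x ≤ |x| ⬝ᵥ A *ᵥ |x| := by
  simp only [dotProduct, mulVec, Pi.abs_apply, Finset.mul_sum]
  refine Finset.sum_le_sum fun i _ ↦ Finset.sum_le_sum fun j _ ↦ ?_
  calc x i * (A i j * x j) ≤ |x i * (A i j * x j)| := le_abs_self _
    _ = |x i| * (A i j * |x j|) := by rw [abs_mul, abs_mul, abs_of_nonneg (hA i j)]

namespace IsHermitian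

variable [DecidableEq n] {A : Matrix n n ℝ} (hA : A.IsHermitian)
include hA

theorem posSemidef_smul_one_sub {r : ℝ} (hr : ∀ i, hA.eigenvalues i ≤ r) :
    (r • 1 - A).PosSemidef := by
  refine posSemidef_iff_isHermitian_and_spectrum_nonneg.mpr
    ⟨(isHermitian_one.smul (IsSelfAdjoint.all r)).sub hA, ?_⟩
  rw [← Algebra.algebraMap_eq_smul_one, ← spectrum.singleton_sub_eq,
    hA.spectrum_real_eq_range_eigenvalues]
  rintro _ ⟨_, rfl, _, ⟨i, rfl⟩, rfl⟩
  exact sub_nonneg.mpr (hr i)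

theorem exists_nonneg_mulVec_eq_iSup_eigenvalues_smul [Nonempty n] (hA₀ : ∀ i j, 0 ≤ A i j) :
    ∃ y : n → ℝ, 0 ≤ y ∧ y ≠ 0 ∧ A *ᵥ y = (⨆ i, hA.eigenvalues i) • y := by
  set r := ⨆ i, hA.eigenvalues i
  obtain ⟨i₀, hi₀⟩ := exists_eq_ciSup_of_finite (f := hA.eigenvalues)
  set x : n → ℝ := (hA.eigenvectorBasis i₀).ofLp
  have hx : x ⬝ᵥ A *ᵥ x = r * (x ⬝ᵥ x) := by
    rw [hA.mulVec_eigenvectorBasis, hi₀, dotProduct_smul, smul_eq_mul]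
  have hx₀ : x ≠ 0 := fun h ↦
    hA.eigenvectorBasis.orthonormal.ne_zero i₀ (WithLp.ofLp_injective 2 h)
  have hM := hA.posSemidef_smul_one_sub fun i ↦
    le_ciSup (Set.finite_range hA.eigenvalues).bddAbove i
  have hMy : ∀ y : n → ℝ, (r • 1 - A) *ᵥ y = r • y - A *ᵥ y := fun y ↦ by
    rw [sub_mulVec, smul_mulVec, one_mulVec]
  -- Since `A ≥ 0`, `|x|` has Rayleigh quotient at least `r`: it minimises the form of `r • 1 - A`.
  have hquad : |x| ⬝ᵥ (r • 1 - A) *ᵥ |x| = 0 := by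
    have h₁ := hM.dotProduct_mulVec_nonneg |x|
    have h₂ := dotProduct_mulVec_le_abs hA₀ x
    have h₃ : |x| ⬝ᵥ |x| = x ⬝ᵥ x := by simp [dotProduct, abs_mul_abs_self]
    rw [star_trivial] at h₁
    rw [hMy, dotProduct_sub, dotProduct_smul, smul_eq_mul, h₃] at h₁ ⊢
    linarith
  refine ⟨|x|, abs_nonneg x, by simpa using hx₀, ?_⟩
  have := (hM.dotProduct_mulVec_zero_iff |x|).mp (by rwa [star_trivial])
  rw [hMy, sub_eq_zero] at this
  exact this.symm

end IsHermitian

end Matrix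

theorem Finset.sum_posPart_eq_half_sum_abs {ι : Type*} (s : Finset ι) {f : ι → ℝ}
    (hf : ∑ i ∈ s, f i = 0) : ∑ i ∈ s, (f i)⁺ = (∑ i ∈ s, |f i|) / 2 := by
  have h : ∀ i ∈ s, 2 * (f i)⁺ = |f i| + f i := fun i _ ↦ by
    linarith [posPart_add_negPart (f i), posPart_sub_negPart (f i)]
  rw [eq_div_iff two_ne_zero, mul_comm, Finset.mul_sum, Finset.sum_congr rfl h,
    Finset.sum_add_distrib, hf, add_zero]

theorem Finset.sum_sub_mul_le_sqrt_mul_sqrt {ι : Type*} (s : Finset ι) {a y : ι → ℝ} {c : ℝ}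
    (ha : ∀ i, 0 ≤ a i) (hc : 0 ≤ c) (hy : ∀ i, 0 ≤ y i) :
    ∑ i ∈ s, (a i - c) * y i ≤ √(∑ i ∈ s, (a i - c)⁺) * √(∑ i ∈ s, a i * y i ^ 2) := by
  set g := fun i ↦ (a i - c)⁺
  have hg : ∀ i, 0 ≤ g i := fun i ↦ posPart_nonneg _
  calc ∑ i ∈ s, (a i - c) * y i
      ≤ ∑ i ∈ s, √(g i) * (√(g i) * y i) := by
        simp only [← mul_assoc, Real.mul_self_sqrt (hg _)]
        gcongr with i
        exacts [hy i, le_posPart _]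
    _ ≤ √(∑ i ∈ s, √(g i) ^ 2) * √(∑ i ∈ s, (√(g i) * y i) ^ 2) :=
        Real.sum_mul_le_sqrt_mul_sqrt _ _ _
    _ ≤ √(∑ i ∈ s, g i) * √(∑ i ∈ s, a i * y i ^ 2) := by
        simp only [mul_pow, Real.sq_sqrt (hg _)]
        gcongr with i
        exact sup_le (by linarith) (ha i)

namespace SimpleGraph

variable {V : Type*} [Fintype V] (G : SimpleGraph V) [DecidableRel G.Adj]

theorem sum_degree_mul_eq_mul_sum {y : V → ℝ} {r : ℝ}
    (hy : G.adjMatrix ℝ *ᵥ y = r • y) : ∑ v, G.degree v * y v = r * ∑ v, y v := by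
  have h : ∑ v, (G.adjMatrix ℝ *ᵥ y) v = ∑ v, G.degree v * y v := by
    rw [← one_dotProduct, dotProduct_mulVec]
    simp [dotProduct, adjMatrix_vecMul_apply]
  rw [← h, hy, Finset.mul_sum]
  rfl

theorem sum_degree_mul_sq_le_sq_sum [Nonempty V] {y : V → ℝ} {r : ℝ}
    (hy₀ : 0 ≤ y) (hy : G.adjMatrix ℝ *ᵥ y = r • y) :
    ∑ v, G.degree v * y v ^ 2 ≤ (∑ v, y v) ^ 2 := by
  classical
  obtain ⟨w, -, hw⟩ := Finset.exists_max_image univ y univ_nonempty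
  set Y := ∑ v, y v
  have hw₀ : 0 ≤ y w := hy₀ w
  have hY : 0 ≤ Y := Finset.sum_nonneg fun v _ ↦ hy₀ v
  have hrw : r * y w ≤ Y - y w := by
    have h := congrFun hy w
    rw [adjMatrix_mulVec_apply, Pi.smul_apply, smul_eq_mul] at h
    rw [← h, ← Finset.sum_erase_eq_sub (mem_univ w)]
    refine Finset.sum_le_sum_of_subset_of_nonneg (fun u hu ↦ ?_) fun u _ _ ↦ hy₀ u
    exact mem_erase.mpr ⟨(G.ne_of_adj (G.mem_neighborFinset w u |>.mp hu)).symm, mem_univ u⟩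
  calc ∑ v, G.degree v * y v ^ 2 ≤ ∑ v, G.degree v * y v * y w := by
        refine Finset.sum_le_sum fun v _ ↦ ?_
        rw [sq, ← mul_assoc]
        exact mul_le_mul_of_nonneg_left (hw v (mem_univ v)) (mul_nonneg (Nat.cast_nonneg _) (hy₀ v))
    _ = r * y w * Y := by
        rw [← Finset.sum_mul, G.sum_degree_mul_eq_mul_sum hy]; ring
    _ ≤ (Y - y w) * Y := by gcongr
    _ ≤ Y ^ 2 := by nlinarith

theorem sum_degree_sub_average_degree [Nonempty V] :
    ∑ v, ((G.degree v : ℝ) - 2 * #G.edgeFinset / Fintype.card V) = 0 := by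
  rw [Finset.sum_sub_distrib, Finset.sum_const, card_univ, nsmul_eq_mul, mul_div_cancel₀ _
    (by positivity), ← Nat.cast_sum, G.sum_degrees_eq_twice_card_edges]
  push_cast
  ring

variable [DecidableEq V]

theorem exists_nonneg_adjMatrix_mulVec_eq_spectralRadius_smul [Nonempty V] :
    ∃ y : V → ℝ, 0 ≤ y ∧ y ≠ 0 ∧ G.adjMatrix ℝ *ᵥ y = G.spectralRadius • y :=
  G.isHermitian_adjMatrix'.exists_nonneg_mulVec_eq_iSup_eigenvalues_smul fun i j ↦ by
    rw [adjMatrix_apply]; split_ifs <;> norm_num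

theorem spectralRadius_le_add_sqrt_sum_posPart [Nonempty V] {c : ℝ} (hc : 0 ≤ c) :
    G.spectralRadius ≤ c + √(∑ v, ((G.degree v : ℝ) - c)⁺) := by
  obtain ⟨y, hy₀, hy_ne, hy⟩ := G.exists_nonneg_adjMatrix_mulVec_eq_spectralRadius_smul
  set Y := ∑ v, y v
  have hY : 0 < Y := Fintype.sum_pos (lt_of_le_of_ne hy₀ hy_ne.symm)
  have key : (G.spectralRadius - c) * Y ≤ √(∑ v, ((G.degree v : ℝ) - c)⁺) * Y :=
    calc (G.spectralRadius - c) * Y = ∑ v, (G.degree v - c) * y v := by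
          simp only [sub_mul, Finset.sum_sub_distrib, ← Finset.mul_sum,
            G.sum_degree_mul_eq_mul_sum hy, Y]
      _ ≤ √(∑ v, ((G.degree v : ℝ) - c)⁺) * √(∑ v, G.degree v * y v ^ 2) :=
          Finset.sum_sub_mul_le_sqrt_mul_sqrt _ (fun _ ↦ Nat.cast_nonneg _) hc hy₀
      _ ≤ √(∑ v, ((G.degree v : ℝ) - c)⁺) * Y := by
          gcongr
          exact Real.sqrt_le_sqrt (G.sum_degree_mul_sq_le_sq_sum hy₀ hy)
            |>.trans_eq (Real.sqrt_sq hY.le)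
  linarith [le_of_mul_le_mul_right key hY]

end SimpleGraph

/-- With `d = ⌈2m/n⌉`, we have `ρ(G) ≤ d + √(s(G)/2)`. -/
theorem spectralRadius_le_ceil_add_sqrt
    {V : Type*} [Fintype V] [DecidableEq V] [Nonempty V]
    (G : SimpleGraph V) [DecidableRel G.Adj]
    (d : ℕ) (hd : d = ⌈2 * (G.edgeFinset.card : ℝ) / (Fintype.card V : ℝ)⌉₊) :
    G.spectralRadius ≤ (d : ℝ) + Real.sqrt (G.degreeDeviation / 2) := by
  set c := 2 * (G.edgeFinset.card : ℝ) / (Fintype.card V : ℝ)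
  have hcd : c ≤ d := hd ▸ Nat.le_ceil c
  calc G.spectralRadius ≤ c + √(∑ v, ((G.degree v : ℝ) - c)⁺) :=
        G.spectralRadius_le_add_sqrt_sum_posPart (by positivity)
    _ = c + √(G.degreeDeviation / 2) := by
        rw [Finset.sum_posPart_eq_half_sum_abs _ G.sum_degree_sub_average_degree]
        rfl
    _ ≤ d + √(G.degreeDeviation / 2) := by gcongr
end
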